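/- For every integer t ≥ 3, let F_t be the tree obtained from a path v_1 v_2 … v_t by attaching t−2 new pendant leaves to v_1, attaching t−2 new pendant leaves to v_t, and attaching t−3 new pendant leaves to each internal vertex v_i with 2 ≤ i ≤ t−1 (all leaves distinct). Then b(F_t) = t. -/
import Mathlib


/-- A proper vertex coloring of `G` using exactly the colors `{1, …, k}`:
every vertex gets a color in `{1, …, k}`, adjacent vertices get different
colors, and every color in `{1, …, k}` is used. -/
def IsProperColoring {V : Type*} (G : SimpleGraph V) (k : ℕ) (c : V → ℕ) : Prop :=
  (∀ v, c v ∈ Finset.Icc 1 k) ∧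
  (∀ u v, G.Adj u v → c u ≠ c v) ∧
  (∀ i ∈ Finset.Icc 1 k, ∃ v, c v = i)

/-- A Grundy coloring of `G` using `k` colors: a proper coloring using `k` colors
such that every vertex of color `j` has, for each color `i < j`, a neighbor of color `i`. -/
def IsGrundyColoring {V : Type*} (G : SimpleGraph V) (k : ℕ) (c : V → ℕ) : Prop :=
  IsProperColoring G k c ∧
  ∀ v, ∀ i ∈ Finset.Icc 1 k, i < c v → ∃ w, G.Adj v w ∧ c w = i

/-- In a coloring `c` of `G` with colors `{1, …, k}`, a vertex `v` is color-dominating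
if for every color `j ∈ {1, …, k}` different from the color of `v`, the vertex `v`
has a neighbor of color `j`. -/
def IsCDVertex {V : Type*} (G : SimpleGraph V) (k : ℕ) (c : V → ℕ) (v : V) : Prop :=
  ∀ j ∈ Finset.Icc 1 k, j ≠ c v → ∃ w, G.Adj v w ∧ c w = j

/-- A color-dominating coloring (b-coloring) of `G` using `k` colors: a proper coloring
using `k` colors in which every color class contains a color-dominating vertex. -/
def IsBColoring {V : Type*} (G : SimpleGraph V) (k : ℕ) (c : V → ℕ) : Prop :=
  IsProperColoring G k c ∧
  ∀ i ∈ Finset.Icc 1 k, ∃ v, c v = i ∧ IsCDVertex G k c v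

/-- A z-coloring of `G` using `k` colors: a proper coloring which is simultaneously
a Grundy coloring and a color-dominating coloring, and which admits color-dominating
vertices `u 1, …, u k` with `c (u j) = j` such that `u k` is adjacent to each `u j`, `j ≠ k`. -/
def IsZColoring {V : Type*} (G : SimpleGraph V) (k : ℕ) (c : V → ℕ) : Prop :=
  IsGrundyColoring G k c ∧ IsBColoring G k c ∧
  ∃ u : ℕ → V,
    (∀ j ∈ Finset.Icc 1 k, c (u j) = j ∧ IsCDVertex G k c (u j)) ∧
    (∀ j ∈ Finset.Icc 1 k, j ≠ k → G.Adj (u k) (u j))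

/-- The Grundy number of `G`: the maximum `k` such that `G` admits a Grundy coloring
using `k` colors. -/
noncomputable def grundyNumber {V : Type*} (G : SimpleGraph V) : ℕ :=
  sSup {k | ∃ c : V → ℕ, IsGrundyColoring G k c}

/-- The b-chromatic number of `G`: the maximum `k` such that `G` admits a b-coloring
using `k` colors. -/
noncomputable def bNumber {V : Type*} (G : SimpleGraph V) : ℕ :=
  sSup {k | ∃ c : V → ℕ, IsBColoring G k c}

/-- The z-chromatic number of `G`: the maximum `k` such that `G` admits a z-coloring
using `k` colors. -/
noncomputable def zNumber {V : Type*} (G : SimpleGraph V) : ℕ :=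
  sSup {k | ∃ c : V → ℕ, IsZColoring G k c}

/-- Number of pendant leaves attached to the path vertex `v_i` (0-indexed) in `F_t`:
the endpoints `v_1` and `v_t` get `t - 2` leaves, internal vertices get `t - 3` leaves. -/
def numLeaves (t : ℕ) (i : Fin t) : ℕ :=
  if (i : ℕ) = 0 ∨ (i : ℕ) = t - 1 then t - 2 else t - 3

/-- The base relation of the tree `F_t`: consecutive path vertices are related, and each
path vertex `v_i` is related to each of its own pendant leaves. -/
def FRel (t : ℕ) :
    (Fin t ⊕ (Σ i : Fin t, Fin (numLeaves t i))) →
    (Fin t ⊕ (Σ i : Fin t, Fin (numLeaves t i))) → Prop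
  | Sum.inl i, Sum.inl j => (i : ℕ) + 1 = (j : ℕ)
  | Sum.inl i, Sum.inr l => i = l.1
  | _, _ => False

/-- The tree `F_t`: a path `v_1 … v_t` with `t - 2` pendant leaves attached to each of
`v_1` and `v_t`, and `t - 3` pendant leaves attached to each internal vertex. -/
def Fgraph (t : ℕ) : SimpleGraph (Fin t ⊕ (Σ i : Fin t, Fin (numLeaves t i))) :=
  SimpleGraph.fromRel (FRel t)

/-- The explicit b-coloring of `F_t` with `t` colors: path vertex `v_i` (0-indexed)
gets color `i+1`, and leaves get the remaining colors. -/
def myc (t : ℕ) : (Fin t ⊕ (Σ i : Fin t, Fin (numLeaves t i))) → ℕ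
  | Sum.inl i => (i : ℕ) + 1
  | Sum.inr ⟨i, l⟩ =>
      if (i : ℕ) = 0 then (l : ℕ) + 3
      else if (i : ℕ) = t - 1 then (l : ℕ) + 1
      else if (l : ℕ) + 1 < (i : ℕ) then (l : ℕ) + 1 else (l : ℕ) + 4

lemma adj_path_leaf (t : ℕ) (i : Fin t) (l : Fin (numLeaves t i)) :
    (Fgraph t).Adj (Sum.inl i) (Sum.inr ⟨i, l⟩) := by
  simp [Fgraph, SimpleGraph.fromRel_adj, FRel]

lemma adj_path_path (t : ℕ) (i j : Fin t) (h : (i : ℕ) + 1 = (j : ℕ)) :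
    (Fgraph t).Adj (Sum.inl i) (Sum.inl j) := by
  rw [Fgraph, SimpleGraph.fromRel_adj]
  refine ⟨?_, Or.inl h⟩
  intro hh
  rw [Sum.inl.injEq] at hh
  subst hh
  omega
lemma path_cd (t : ℕ) (ht : 3 ≤ t) (i : Fin t) :
    IsCDVertex (Fgraph t) t (myc t) (Sum.inl i) := by
  intro j hj hne
  rw [Finset.mem_Icc] at hj
  have hi := i.isLt
  have hmy : myc t (Sum.inl i) = (i : ℕ) + 1 := rfl
  rw [hmy] at hne
  by_cases h1 : j = (i : ℕ)
  · -- left path neighbor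
    have hipos : 1 ≤ (i : ℕ) := by omega
    refine ⟨Sum.inl ⟨(i : ℕ) - 1, by omega⟩, (adj_path_path t _ i (by simp; omega)).symm, ?_⟩
    simp [myc]; omega
  by_cases h2 : j = (i : ℕ) + 2
  · -- right path neighbor
    refine ⟨Sum.inl ⟨(i : ℕ) + 1, by omega⟩, adj_path_path t i _ (by simp), ?_⟩
    simp [myc]; omega
  -- a leaf
  by_cases h0 : (i : ℕ) = 0
  · have hjge : 3 ≤ j := by omega
    refine ⟨Sum.inr ⟨i, ⟨j - 3, ?_⟩⟩, adj_path_leaf t i _, ?_⟩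
    · unfold numLeaves; rw [if_pos (Or.inl h0)]; omega
    · simp [myc, h0]; omega
  by_cases hlast : (i : ℕ) = t - 1
  · have hjle : j ≤ t - 2 := by omega
    refine ⟨Sum.inr ⟨i, ⟨j - 1, ?_⟩⟩, adj_path_leaf t i _, ?_⟩
    · unfold numLeaves; rw [if_pos (Or.inr hlast)]; omega
    · simp [myc, h0, hlast]; split_ifs <;> omega
  · -- internal vertex
    by_cases hlt : j < (i : ℕ)
    · refine ⟨Sum.inr ⟨i, ⟨j - 1, ?_⟩⟩, adj_path_leaf t i _, ?_⟩
      · unfold numLeaves; rw [if_neg (by omega)]; omega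
      · simp [myc, h0, hlast]; split_ifs <;> omega
    · have hjgt : (i : ℕ) + 2 < j := by omega
      refine ⟨Sum.inr ⟨i, ⟨j - 4, ?_⟩⟩, adj_path_leaf t i _, ?_⟩
      · unfold numLeaves; rw [if_neg (by omega)]; omega
      · simp [myc, h0, hlast]; split_ifs <;> omega
lemma lower_bcoloring (t : ℕ) (ht : 3 ≤ t) : IsBColoring (Fgraph t) t (myc t) := by
  constructor
  · refine ⟨?_, ?_, ?_⟩
    · -- colors in range
      rintro (i | ⟨i, l⟩)
      · have := i.isLt
        simp [myc, Finset.mem_Icc]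
      · have hl := l.isLt
        have hi := i.isLt
        unfold numLeaves at hl
        rw [Finset.mem_Icc]
        simp only [myc]
        split_ifs at hl ⊢ <;> omega
    · -- proper
      rintro (i | ⟨i, l⟩) (j | ⟨j, m⟩) hadj <;>
        simp only [Fgraph, SimpleGraph.fromRel_adj, FRel, ne_eq, or_false, false_or,
          or_self] at hadj
      · obtain ⟨-, h⟩ := hadj
        simp only [myc]; omega
      · obtain ⟨-, h⟩ := hadj
        subst h
        have hm := m.isLt
        have hi := i.isLt
        unfold numLeaves at hm
        simp only [myc]
        split_ifs at hm ⊢ <;> omega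
      · obtain ⟨-, h⟩ := hadj
        subst h
        have hl := l.isLt
        have hj := j.isLt
        unfold numLeaves at hl
        simp only [myc]
        split_ifs at hl ⊢ <;> omega
      · exact absurd hadj.2 (by simp)
    · -- all colors used
      intro j hj
      rw [Finset.mem_Icc] at hj
      exact ⟨Sum.inl ⟨j - 1, by omega⟩, by simp [myc]; omega⟩
  · -- every color class has a CD vertex
    intro j hj
    rw [Finset.mem_Icc] at hj
    exact ⟨Sum.inl ⟨j - 1, by omega⟩, by simp [myc]; omega, path_cd t ht _⟩
lemma upper_bound (t k : ℕ) (ht : 3 ≤ t) (c : (Fin t ⊕ (Σ i : Fin t, Fin (numLeaves t i))) → ℕ)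
    (h : IsBColoring (Fgraph t) k c) : k ≤ t := by
  by_contra hk
  push_neg at hk
  -- there is a CD vertex of color 1
  obtain ⟨v, hv1, hcd⟩ := h.2 1 (by rw [Finset.mem_Icc]; omega)
  have hW : ∀ j : ℕ, ∃ x, j ∈ Finset.Icc 2 k → (Fgraph t).Adj v x ∧ c x = j := by
    intro j
    by_cases hj : j ∈ Finset.Icc 2 k
    · rw [Finset.mem_Icc] at hj
      obtain ⟨x, hx⟩ := hcd j (by rw [Finset.mem_Icc]; omega) (by omega)
      exact ⟨x, fun _ => hx⟩
    · exact ⟨v, fun hh => absurd hh hj⟩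
  choose w hw using hW
  have hw1 : ∀ j ∈ Finset.Icc 2 k, (Fgraph t).Adj v (w j) := fun j hj => (hw j hj).1
  have hw2 : ∀ j ∈ Finset.Icc 2 k, c (w j) = j := fun j hj => (hw j hj).2
  clear hw
  obtain (i | ⟨i, l⟩) := v
  · -- v is a path vertex
    classical
    set P : Finset (Fin t) :=
      Finset.univ.filter (fun j : Fin t => (j : ℕ) + 1 = (i : ℕ) ∨ (i : ℕ) + 1 = (j : ℕ))
      with hP
    set S : Finset (Fin t ⊕ (Σ i : Fin t, Fin (numLeaves t i))) :=
      P.image Sum.inl ∪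
        Finset.univ.image (fun l : Fin (numLeaves t i) => Sum.inr ⟨i, l⟩) with hS
    have hmaps : ∀ j ∈ Finset.Icc 2 k, w j ∈ S := by
      intro j hj
      have hadj := hw1 j hj
      rw [Fgraph, SimpleGraph.fromRel_adj] at hadj
      obtain ⟨hne, hrel⟩ := hadj
      rcases huj : w j with j' | ⟨i', l'⟩ <;> rw [huj] at hrel
      · rw [hS, Finset.mem_union]
        left
        refine Finset.mem_image_of_mem _ ?_
        rw [hP, Finset.mem_filter]
        refine ⟨Finset.mem_univ _, ?_⟩
        simp only [FRel] at hrel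
        tauto
      · have hii' : i = i' := by
          simp only [FRel, or_false, false_or] at hrel
          exact hrel
        subst hii'
        rw [hS, Finset.mem_union]
        right
        exact Finset.mem_image_of_mem _ (Finset.mem_univ l')
    have hinj : Set.InjOn w ↑(Finset.Icc 2 k) := by
      intro a ha b hb hab
      rw [Finset.mem_coe] at ha hb
      have := hw2 a ha
      have := hw2 b hb
      rw [hab] at *
      omega
    have hcard : (Finset.Icc 2 k).card ≤ S.card :=
      Finset.card_le_card_of_injOn w hmaps hinj
    have hScard : S.card ≤ t - 1 := by
      have h1 : S.card ≤ P.card + numLeaves t i := by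
        refine (Finset.card_union_le _ _).trans ?_
        gcongr
        · exact Finset.card_image_le.trans (by simp)
        · exact Finset.card_image_le.trans (by simp)
      have hi := i.isLt
      by_cases h0 : (i : ℕ) = 0 ∨ (i : ℕ) = t - 1
      · have hP1 : P.card ≤ 1 := by
          rcases h0 with h0 | h0
          · have : P ⊆ {⟨1, by omega⟩} := by
              intro x hx
              rw [hP, Finset.mem_filter] at hx
              have : (x : ℕ) = 1 := by omega
              simp [Fin.ext_iff, this]
            exact (Finset.card_le_card this).trans (by simp)
          · have : P ⊆ {⟨t - 2, by omega⟩} := by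
              intro x hx
              rw [hP, Finset.mem_filter] at hx
              have hx2 := x.isLt
              have : (x : ℕ) = t - 2 := by omega
              simp [Fin.ext_iff, this]
            exact (Finset.card_le_card this).trans (by simp)
        have hnl : numLeaves t i = t - 2 := by unfold numLeaves; rw [if_pos h0]
        omega
      · have hP2 : P.card ≤ 2 := by
          have : P ⊆ {⟨(i : ℕ) - 1, by omega⟩, ⟨(i : ℕ) + 1, by omega⟩} := by
            intro x hx
            rw [hP, Finset.mem_filter] at hx
            rw [Finset.mem_insert, Finset.mem_singleton]
            rw [Fin.ext_iff, Fin.ext_iff]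
            simp only []
            omega
          exact (Finset.card_le_card this).trans ((Finset.card_insert_le _ _).trans (by simp))
        have hnl : numLeaves t i = t - 3 := by unfold numLeaves; rw [if_neg h0]
        omega
    rw [Nat.card_Icc] at hcard
    omega
  · -- v is a leaf: it has a single neighbor, contradiction
    have h2 : (2 : ℕ) ∈ Finset.Icc 2 k := by rw [Finset.mem_Icc]; omega
    have h3 : (3 : ℕ) ∈ Finset.Icc 2 k := by rw [Finset.mem_Icc]; omega
    have key : ∀ j ∈ Finset.Icc 2 k, w j = Sum.inl i := by
      intro j hj
      have hadj := hw1 j hj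
      rw [Fgraph, SimpleGraph.fromRel_adj] at hadj
      obtain ⟨hne, hrel⟩ := hadj
      rcases huj : w j with j' | ⟨i', l'⟩ <;> rw [huj] at hrel
      · simp only [FRel, false_or] at hrel
        rw [hrel]
      · simp only [FRel, or_self] at hrel
    have e2 := hw2 2 h2
    have e3 := hw2 3 h3
    rw [key 2 h2] at e2
    rw [key 3 h3] at e3
    omega
/-- For every `t ≥ 3`, `b(F_t) = t`. -/
theorem statement_8 (t : ℕ) (ht : 3 ≤ t) : bNumber (Fgraph t) = t := by
  have hmem : t ∈ {k | ∃ c, IsBColoring (Fgraph t) k c} := ⟨myc t, lower_bcoloring t ht⟩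
  have hub : ∀ k ∈ {k | ∃ c, IsBColoring (Fgraph t) k c}, k ≤ t := by
    rintro k ⟨c, hc⟩
    exact upper_bound t k ht c hc
  exact le_antisymm (csSup_le ⟨t, hmem⟩ hub) (le_csSup ⟨t, hub⟩ hmem)
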